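/- Let b ∈ W satisfy φ_W(φ_W(b)) = b and set b' = φ_W(b). In the ring of 2×2 matrices over W[[X₁,X₂]][1/p] set Y₀ = [[b'·f(X₁), p·b − b'·g(X₁)], [b', −b'·f(X₁)]] and Z₀ = [[−b·f(X₁^p), p·b], [b' − p⁻¹·b·g(X₁^p), b·f(X₁^p)]], and define Y[1] = p⁻¹·[[X₁, p], [1, 0]]·φ(Z₀)·[[0, p], [1, −X₁]] and Z[1] = p⁻¹·[[X₂, p], [1, 0]]·φ(Y₀)·[[0, p], [1, −X₂]]. Then Y[1] = Y₀, and every entry of p·(Z[1] − Z₀) lies in X₂·W[[X₁,X₂]] (inside the localization). (This is the explicit first step of the two-variable recursion in the ramified case of §3.4: Y₁ = 0 and Z₁ is divisible by X₂.) -/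

import Mathlib

noncomputable section

/-- The power series `f = ∑_{n≥0} X^{p^{2n}} ∈ ℤ[[X]]` (for `p ≥ 2` the exponents `p^{2n}`
are pairwise distinct, so the coefficient of `X^k` is `1` if `k = p^{2n}` for some `n`,
and `0` otherwise). -/
def fSeries (p : ℕ) : PowerSeries ℤ :=
  PowerSeries.mk fun k => open Classical in if ∃ n : ℕ, k = p ^ (2 * n) then 1 else 0

/-- The power series `g = ∑_{m≥0} X^{p^{2m}}·(X^{p^{2m}} + 2·∑_{0≤i<m} X^{p^{2i}}) ∈ ℤ[[X]]`:
its coefficient of `X^k` is `1` if `k = 2·p^{2m}` for some `m`, plus `2` if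
`k = p^{2m} + p^{2i}` for some `i < m` (for `p ≥ 2` these exponents are pairwise distinct). -/
def gSeries (p : ℕ) : PowerSeries ℤ :=
  PowerSeries.mk fun k => open Classical in
    (if ∃ m : ℕ, k = 2 * p ^ (2 * m) then 1 else 0) +
      (if ∃ m i : ℕ, i < m ∧ k = p ^ (2 * m) + p ^ (2 * i) then 2 else 0)

/-- `𝔽 = 𝔽_p^alg`, an algebraic closure of the field with `p` elements. -/
abbrev Fbar (p : ℕ) [Fact p.Prime] : Type := AlgebraicClosure (ZMod p)

/-- `W = W(𝔽)`, the ring of Witt vectors of `𝔽`. -/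
abbrev W (p : ℕ) [Fact p.Prime] : Type := WittVector p (Fbar p)

/-- `φ_W : W → W`, the Witt vector Frobenius. -/
abbrev phiW (p : ℕ) [Fact p.Prime] : W p →+* W p := WittVector.frobenius

/-- `W[[X₁,X₂]]`, the formal power series ring in two variables over `W`. -/
abbrev Mv (p : ℕ) [Fact p.Prime] : Type := MvPowerSeries (Fin 2) (W p)

/-- The constant-series embedding `W → W[[X₁,X₂]]`. -/
abbrev CMv (p : ℕ) [Fact p.Prime] : W p →+* Mv p := MvPowerSeries.C

/-- `G` is the evaluation `F(X₁^e)` of a one-variable integral power series `F` at `X₁^e`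
inside `W[[X₁,X₂]]` (characterized by coefficients: the coefficient of `X₁^{e·k}` in `G` is
the `k`-th coefficient of `F`, and all other coefficients of `G` vanish). -/
def IsEvalAtX1Pow (p : ℕ) [Fact p.Prime] (e : ℕ) (F : PowerSeries ℤ) (G : Mv p) : Prop :=
  (∀ k : ℕ, MvPowerSeries.coeff (Finsupp.single 0 (e * k)) G =
      ((PowerSeries.coeff k F : ℤ) : W p)) ∧
    (∀ d : Fin 2 →₀ ℕ, d 1 ≠ 0 → MvPowerSeries.coeff d G = 0) ∧
    (∀ k : ℕ, ¬ e ∣ k → MvPowerSeries.coeff (Finsupp.single 0 k) G = 0)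

/-- `W[[X₁,X₂]][1/p]`, the localization of `W[[X₁,X₂]]` away from `p`. -/
abbrev L2 (p : ℕ) [Fact p.Prime] : Type := Localization.Away ((p : Mv p))

/-- The canonical map `W[[X₁,X₂]] → W[[X₁,X₂]][1/p]`. -/
abbrev iota2 (p : ℕ) [Fact p.Prime] : Mv p →+* L2 p := algebraMap _ _

/-!
The Frobenius lift `φ` fixes `p` and `p⁻¹`, swaps `b` and `b' = φ_W(b)` (because `φ_W² b = b`),
sends `f(X₁)` to `f(X₁^p)`, and sends `f(X₁^p)` to `f(X₁^{p²}) = f(X₁) - X₁`; moreover `g = f²`,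
because `p^{2i} + p^{2j}` determines `{i, j}`. After these substitutions both claims are
polynomial identities in a commutative ring in which `p · p⁻¹ = 1`.
-/

theorem Nat.pow_add_pow_inj_of_le {q : ℕ} (hq : 2 ≤ q) {i j k l : ℕ} (hij : i ≤ j) (hkl : k ≤ l)
    (h : q ^ i + q ^ j = q ^ k + q ^ l) : i = k ∧ j = l := by
  -- if `i < k ≤ l`, then `q ^ (i + 1)` divides the right side; this is impossible for `j > i`
  -- (it would divide `q ^ i`), and for `j = i` the left side is too small
  have key : ∀ {i j k l : ℕ}, i ≤ j → k ≤ l → q ^ i + q ^ j = q ^ k + q ^ l → k ≤ i := by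
    intro i j k l hij hkl h
    by_contra! hik
    have hlt : q ^ i < q ^ (i + 1) := Nat.pow_lt_pow_right hq (Nat.lt_succ_self i)
    have hk : q ^ (i + 1) ∣ q ^ k := pow_dvd_pow q hik
    have hl : q ^ (i + 1) ∣ q ^ l := pow_dvd_pow q (by omega)
    rcases hij.eq_or_lt with rfl | hij
    · have := Nat.le_of_dvd (by positivity) hk
      have := Nat.le_of_dvd (by positivity) hl
      omega
    · have hdvd : q ^ (i + 1) ∣ q ^ i + q ^ j := h ▸ dvd_add hk hl
      rw [Nat.dvd_add_left (pow_dvd_pow q hij)] at hdvd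
      exact absurd (Nat.le_of_dvd (by positivity) hdvd) (not_le.mpr hlt)
  obtain rfl := le_antisymm (key hkl hij h.symm) (key hij hkl h)
  exact ⟨rfl, Nat.pow_right_injective hq (Nat.add_left_cancel h)⟩

theorem Nat.pow_add_pow_inj {q : ℕ} (hq : 2 ≤ q) {i j k l : ℕ}
    (h : q ^ i + q ^ j = q ^ k + q ^ l) : (i = k ∧ j = l) ∨ (i = l ∧ j = k) := by
  rcases le_total i j with hij | hji <;> rcases le_total k l with hkl | hlk
  · exact .inl (pow_add_pow_inj_of_le hq hij hkl h)
  · exact .inr (pow_add_pow_inj_of_le hq hij hlk (h.trans (add_comm _ _)))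
  · exact .inr (pow_add_pow_inj_of_le hq hji hkl ((add_comm _ _).trans h)).symm
  · obtain ⟨hjl, hik⟩ := pow_add_pow_inj_of_le hq hji hlk (by rwa [add_comm, add_comm (q ^ l)])
    exact .inl ⟨hik, hjl⟩

theorem Nat.exists_mul_eq_pow_iff {q m : ℕ} (hq : 2 ≤ q) :
    (∃ n, q * m = q ^ n) ↔ ∃ n, m = q ^ n := by
  constructor
  · rintro ⟨_ | n, h⟩
    · have := Nat.eq_one_of_mul_eq_one_right (h.trans (pow_zero q))
      omega
    · exact ⟨n, Nat.eq_of_mul_eq_mul_left (by omega) (h.trans Nat.pow_succ')⟩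
  · rintro ⟨n, rfl⟩
    exact ⟨n + 1, Nat.pow_succ'.symm⟩

theorem Nat.exists_eq_pow_iff_of_not_dvd {q k : ℕ} (hk : ¬ q ∣ k) :
    (∃ n, k = q ^ n) ↔ k = 1 := by
  constructor
  · rintro ⟨_ | n, rfl⟩
    · rfl
    · exact absurd (dvd_pow_self q n.succ_ne_zero) hk
  · rintro rfl
    exact ⟨0, rfl⟩

open Classical in
theorem coeff_fSeries (p k : ℕ) :
    PowerSeries.coeff k (fSeries p) = if ∃ n, k = (p ^ 2) ^ n then 1 else 0 := by
  simp only [fSeries, PowerSeries.coeff_mk, pow_mul]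

open Classical in
theorem coeff_gSeries (p k : ℕ) :
    PowerSeries.coeff k (gSeries p) = (if ∃ m, k = 2 * (p ^ 2) ^ m then 1 else 0) +
      (if ∃ m i, i < m ∧ k = (p ^ 2) ^ m + (p ^ 2) ^ i then 2 else 0) := by
  simp only [gSeries, PowerSeries.coeff_mk, pow_mul]

open Classical Finset in
theorem filter_antidiagonal_pow_add_pow {q : ℕ} (hq : 2 ≤ q) (u v : ℕ) :
    (antidiagonal (q ^ u + q ^ v)).filter
        (fun x : ℕ × ℕ => (∃ a, x.1 = q ^ a) ∧ ∃ c, x.2 = q ^ c) =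
      {(q ^ u, q ^ v), (q ^ v, q ^ u)} := by
  ext ⟨a, c⟩
  simp only [Finset.mem_filter, Finset.HasAntidiagonal.mem_antidiagonal, Finset.mem_insert,
    Finset.mem_singleton]
  constructor
  · rintro ⟨hsum, ⟨a, rfl⟩, ⟨c, rfl⟩⟩
    rcases Nat.pow_add_pow_inj hq hsum with ⟨rfl, rfl⟩ | ⟨rfl, rfl⟩ <;> simp
  · rintro (h | h) <;> obtain ⟨rfl, rfl⟩ := Prod.ext_iff.mp h
    · exact ⟨rfl, ⟨u, rfl⟩, ⟨v, rfl⟩⟩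
    · exact ⟨add_comm _ _, ⟨v, rfl⟩, ⟨u, rfl⟩⟩

open Classical Finset in
theorem fSeries_mul_self {p : ℕ} (hp : 2 ≤ p) : fSeries p * fSeries p = gSeries p := by
  have hq : 2 ≤ p ^ 2 := by nlinarith
  ext n
  rw [PowerSeries.coeff_mul, coeff_gSeries]
  simp only [coeff_fSeries, ite_zero_mul_ite_zero, mul_one]
  rw [Finset.sum_boole]
  set q := p ^ 2
  by_cases hn : ∃ u v, v ≤ u ∧ n = q ^ u + q ^ v
  · obtain ⟨u, v, hvu, rfl⟩ := hn
    rw [filter_antidiagonal_pow_add_pow hq]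
    rcases hvu.eq_or_lt with rfl | hvu
    · have hB : ¬ ∃ m i, i < m ∧ q ^ v + q ^ v = q ^ m + q ^ i := by
        rintro ⟨m, i, him, h⟩
        rcases Nat.pow_add_pow_inj hq h with ⟨rfl, rfl⟩ | ⟨rfl, rfl⟩ <;> omega
      have hA : ∃ m, q ^ v + q ^ v = 2 * q ^ m := ⟨v, (two_mul _).symm⟩
      simp [hA, hB]
    · have hA : ¬ ∃ m, q ^ u + q ^ v = 2 * q ^ m := by
        rintro ⟨m, h⟩
        rw [two_mul] at h
        rcases Nat.pow_add_pow_inj hq h with ⟨rfl, rfl⟩ | ⟨rfl, rfl⟩ <;> omega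
      have hne : q ^ u ≠ q ^ v := (Nat.pow_right_injective hq).ne hvu.ne'
      have hB : ∃ m i, i < m ∧ q ^ u + q ^ v = q ^ m + q ^ i := ⟨u, v, hvu, rfl⟩
      simp [hA, hB, hne]
  · have hS : (antidiagonal n).filter
        (fun x : ℕ × ℕ => (∃ a, x.1 = q ^ a) ∧ ∃ c, x.2 = q ^ c) = ∅ := by
      refine Finset.filter_eq_empty_iff.mpr ?_
      rintro ⟨a, c⟩ hx ⟨⟨u, rfl⟩, ⟨v, rfl⟩⟩
      rw [Finset.HasAntidiagonal.mem_antidiagonal] at hx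
      rcases le_total v u with hvu | huv
      · exact hn ⟨u, v, hvu, hx.symm⟩
      · exact hn ⟨v, u, huv, by rw [← hx, add_comm]⟩
    have hA : ¬ ∃ m, n = 2 * q ^ m := fun ⟨m, h⟩ => hn ⟨m, m, le_rfl, by omega⟩
    have hB : ¬ ∃ m i, i < m ∧ n = q ^ m + q ^ i := fun ⟨m, i, h, e⟩ => hn ⟨m, i, h.le, e⟩
    simp [hS, hA, hB]

theorem expand_fSeries {p : ℕ} (hp : 2 ≤ p) :
    PowerSeries.expand (p ^ 2) (by positivity) (fSeries p) = fSeries p - PowerSeries.X := by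
  have hq : 2 ≤ p ^ 2 := by nlinarith
  ext k
  rw [map_sub, coeff_fSeries, PowerSeries.coeff_X]
  by_cases hk : p ^ 2 ∣ k
  · obtain ⟨m, rfl⟩ := hk
    have hne : p ^ 2 * m ≠ 1 := fun h => by
      have := Nat.eq_one_of_mul_eq_one_right h
      omega
    rw [PowerSeries.coeff_expand_mul, coeff_fSeries, if_neg hne, sub_zero,
      Nat.exists_mul_eq_pow_iff hq]
  · rw [PowerSeries.coeff_expand_of_not_dvd _ _ _ hk, Nat.exists_eq_pow_iff_of_not_dvd hk]
    split_ifs <;> simp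

theorem Matrix.map_fin_two {α β : Type*} (f : α → β) (a b c d : α) :
    (!![a, b; c, d]).map f = !![f a, f b; f c, f d] := by
  ext i j
  fin_cases i <;> fin_cases j <;> rfl

section RecursionStep

variable {R : Type*} [CommRing R] {p q : R}

theorem matrix_eq_smul_of_mul_eq_one (hpq : p * q = 1) (a b c d e : R) :
    !![a, b; c - q * d, e] = q • !![p * a, p * b; p * c - d, p * e] := by
  simp only [Matrix.smul_of, Matrix.smul_cons, smul_eq_mul, Matrix.smul_empty,
    EmbeddingLike.apply_eq_iff_eq, Matrix.vecCons_inj, and_true]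
  refine ⟨⟨?_, ?_⟩, ?_, ?_⟩
  · linear_combination (-a) * hpq
  · linear_combination (-b) * hpq
  · linear_combination (-c) * hpq
  · linear_combination (-e) * hpq

theorem map_eq_of_mul_eq_one {σ : R →+* R} (hpq : p * q = 1) (hp : σ p = p) : σ q = q :=
  left_inv_eq_right_inv (by rw [← hp, ← map_mul, mul_comm q p, hpq, map_one]) hpq

variable {σ : R →+* R} {x b b' f f' : R}

theorem recursion_Y_eq (hpq : p * q = 1) (hp : σ p = p) (hb : σ b = b') (hb' : σ b' = b)
    (hf' : σ f' = f - x) :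
    q • (!![x, p; 1, 0] * (!![-(b * f'), p * b; b' - q * (b * f' ^ 2), b * f']).map σ *
      !![0, p; 1, -x]) = !![b' * f, p * b - b' * f ^ 2; b', -(b' * f)] := by
  have hprod : !![x, p; 1, 0] * !![p * -(b' * (f - x)), p * (p * b');
        p * b - b' * (f - x) ^ 2, p * (b' * (f - x))] * !![0, p; 1, -x] =
      (p * p) • !![b' * f, p * b - b' * f ^ 2; b', -(b' * f)] := by
    ext i j
    fin_cases i <;> fin_cases j <;> simp [Matrix.mul_apply, Fin.sum_univ_two] <;> ring
  simp only [Matrix.map_fin_two, map_neg, map_mul, map_sub, map_pow, map_eq_of_mul_eq_one hpq hp,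
    hp, hb, hb', hf']
  rw [matrix_eq_smul_of_mul_eq_one hpq, Matrix.mul_smul, Matrix.smul_mul, hprod, smul_smul,
    smul_smul, show q * q * (p * p) = 1 by linear_combination (p * q + 1) * hpq, one_smul]

theorem recursion_Z_sub_eq (hpq : p * q = 1) (hp : σ p = p) (hb : σ b = b') (hb' : σ b' = b)
    (hf : σ f = f') :
    p • (q • (!![x, p; 1, 0] * (!![b' * f, p * b - b' * f ^ 2; b', -(b' * f)]).map σ *
      !![0, p; 1, -x]) - !![-(b * f'), p * b; b' - q * (b * f' ^ 2), b * f']) =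
      x • !![p * b' - b * f' ^ 2, 2 * p * b * f' - x * (p * b' - b * f' ^ 2);
        0, -(p * b' - b * f' ^ 2)] := by
  rw [matrix_eq_smul_of_mul_eq_one hpq, ← smul_sub, smul_smul, hpq, one_smul]
  ext i j
  fin_cases i <;> fin_cases j <;>
    simp [Matrix.map_fin_two, hp, hb, hb', hf] <;> ring

theorem Finsupp.eq_single_zero_of_apply_one_eq_zero {d : Fin 2 →₀ ℕ} (h : d 1 = 0) :
    d = Finsupp.single 0 (d 0) := by
  ext i
  fin_cases i <;> simp [h]

namespace IsEvalAtX1Pow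

variable {p : ℕ} [Fact p.Prime] {e : ℕ} {F F₁ F₂ : PowerSeries ℤ} {G G' G₁ G₂ : Mv p}

theorem unique (h : IsEvalAtX1Pow p e F G) (h' : IsEvalAtX1Pow p e F G') : G = G' := by
  ext d : 1
  by_cases hd : d 1 = 0
  · rw [Finsupp.eq_single_zero_of_apply_one_eq_zero hd]
    by_cases he : e ∣ d 0
    · obtain ⟨k, hk⟩ := he
      rw [hk, h.1, h'.1]
    · rw [h.2.2 _ he, h'.2.2 _ he]
  · rw [h.2.1 d hd, h'.2.1 d hd]

theorem sub (h₁ : IsEvalAtX1Pow p e F₁ G₁) (h₂ : IsEvalAtX1Pow p e F₂ G₂) :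
    IsEvalAtX1Pow p e (F₁ - F₂) (G₁ - G₂) :=
  ⟨fun k => by rw [map_sub, map_sub, h₁.1, h₂.1, Int.cast_sub],
    fun d hd => by rw [map_sub, h₁.2.1 d hd, h₂.2.1 d hd, sub_zero],
    fun k hk => by rw [map_sub, h₁.2.2 k hk, h₂.2.2 k hk, sub_zero]⟩

theorem mul (h₁ : IsEvalAtX1Pow p 1 F₁ G₁) (h₂ : IsEvalAtX1Pow p 1 F₂ G₂) :
    IsEvalAtX1Pow p 1 (F₁ * F₂) (G₁ * G₂) := by
  refine ⟨fun k => ?_, fun d hd => ?_, fun k hk => absurd (one_dvd k) hk⟩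
  · have c₁ (k : ℕ) : MvPowerSeries.coeff (Finsupp.single 0 k) G₁ = PowerSeries.coeff k F₁ := by
      simpa using h₁.1 k
    have c₂ (k : ℕ) : MvPowerSeries.coeff (Finsupp.single 0 k) G₂ = PowerSeries.coeff k F₂ := by
      simpa using h₂.1 k
    rw [one_mul, MvPowerSeries.coeff_mul, Finsupp.antidiagonal_single, Finset.sum_map,
      PowerSeries.coeff_mul, Int.cast_sum]
    refine Finset.sum_congr rfl fun x _ => ?_
    simp [c₁, c₂]
  · rw [MvPowerSeries.coeff_mul]
    refine Finset.sum_eq_zero fun x hx => ?_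
    have hsum : x.1 1 + x.2 1 = d 1 := by
      rw [← Finsupp.add_apply, Finset.HasAntidiagonal.mem_antidiagonal.mp hx]
    rcases Nat.eq_zero_or_pos (x.1 1) with h0 | h0
    · rw [h₂.2.1 x.2 (by omega), mul_zero]
    · rw [h₁.2.1 x.1 h0.ne', zero_mul]

theorem X : IsEvalAtX1Pow p 1 PowerSeries.X (MvPowerSeries.X 0) := by
  refine ⟨fun k => ?_, fun d hd => ?_, fun k hk => absurd (one_dvd k) hk⟩
  · rw [one_mul, MvPowerSeries.coeff_X, PowerSeries.coeff_X]
    by_cases hk : k = 1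
    · simp [hk]
    · simp [hk, (Finsupp.single_injective (0 : Fin 2)).ne hk]
  · rw [MvPowerSeries.coeff_X, if_neg]
    rintro rfl
    simp at hd

theorem of_expand {q : ℕ} (hq : q ≠ 0) (h : IsEvalAtX1Pow p 1 (PowerSeries.expand q hq F) G) :
    IsEvalAtX1Pow p q F G := by
  refine ⟨fun k => ?_, h.2.1, fun k hk => ?_⟩
  · simpa using h.1 (q * k)
  · simpa [PowerSeries.coeff_expand_of_not_dvd _ _ _ hk] using h.1 k

end IsEvalAtX1Pow

section Frobenius

variable {p : ℕ} [Fact p.Prime] {Φ : Mv p →+* Mv p}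
  (hΦ₁ : ∀ (F : Mv p) (d : Fin 2 →₀ ℕ),
    MvPowerSeries.coeff (p • d) (Φ F) = phiW p (MvPowerSeries.coeff d F))
  (hΦ₂ : ∀ (F : Mv p) (d : Fin 2 →₀ ℕ),
    (¬ ∃ e : Fin 2 →₀ ℕ, d = p • e) → MvPowerSeries.coeff d (Φ F) = 0)
include hΦ₁ hΦ₂

theorem coeff_frobenius_eq_zero {F : Mv p} {d : Fin 2 →₀ ℕ}
    (hd : ∀ e, d = p • e → MvPowerSeries.coeff e F = 0) : MvPowerSeries.coeff d (Φ F) = 0 := by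
  by_cases he : ∃ e, d = p • e
  · obtain ⟨e, rfl⟩ := he
    rw [hΦ₁, hd e rfl, map_zero]
  · exact hΦ₂ F d he

theorem frobenius_C (c : W p) : Φ (CMv p c) = CMv p (phiW p c) := by
  ext d : 1
  by_cases hd : d = 0
  · subst hd
    simpa using hΦ₁ (CMv p c) 0
  · rw [MvPowerSeries.coeff_C, if_neg hd]
    refine coeff_frobenius_eq_zero hΦ₁ hΦ₂ fun e he => ?_
    rw [MvPowerSeries.coeff_C, if_neg]
    rintro rfl
    exact hd (by simpa using he)

theorem IsEvalAtX1Pow.frobenius {e e' : ℕ} {F : PowerSeries ℤ} {G : Mv p}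
    (h : IsEvalAtX1Pow p e F G) (he : p * e = e') : IsEvalAtX1Pow p e' F (Φ G) := by
  subst he
  have hp : p ≠ 0 := (Fact.out : p.Prime).ne_zero
  refine ⟨fun k => ?_, fun d hd => ?_, fun k hk => ?_⟩
  · have hsmul : Finsupp.single (0 : Fin 2) (p * e * k) = p • Finsupp.single 0 (e * k) := by
      rw [Finsupp.smul_single, smul_eq_mul, mul_assoc]
    rw [hsmul, hΦ₁, h.1, map_intCast]
  · refine coeff_frobenius_eq_zero hΦ₁ hΦ₂ fun d' hd' => h.2.1 d' fun h0 => hd ?_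
    simp [hd', h0]
  · refine coeff_frobenius_eq_zero hΦ₁ hΦ₂ fun d' hd' => ?_
    have h1 : d' 1 = 0 := by simpa [hp] using (congrArg (· 1) hd').symm
    have hk' : k = p * d' 0 := by simpa using congrArg (· 0) hd'
    rw [Finsupp.eq_single_zero_of_apply_one_eq_zero h1]
    exact h.2.2 _ fun hdvd => hk (hk' ▸ mul_dvd_mul_left p hdvd)

end Frobenius

/-- Let `b ∈ W` be fixed by `φ_W²` and `b' = φ_W(b)`.  With
`Y₀ = [[b'·f(X₁), p·b − b'·g(X₁)], [b', −b'·f(X₁)]]` and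
`Z₀ = [[−b·f(X₁^p), p·b], [b' − p⁻¹·b·g(X₁^p), b·f(X₁^p)]]` over `W[[X₁,X₂]][1/p]`, and
`Y[1] = p⁻¹·[[X₁, p], [1, 0]]·φ(Z₀)·[[0, p], [1, −X₁]]`,
`Z[1] = p⁻¹·[[X₂, p], [1, 0]]·φ(Y₀)·[[0, p], [1, −X₂]]`
(where `φ` is the ring endomorphism of `W[[X₁,X₂]]` acting as `φ_W` on coefficients and
sending `Xᵢ` to `Xᵢ^p`, extended to the localization and applied entrywise), one has
`Y[1] = Y₀`, and every entry of `p·(Z[1] − Z₀)` lies in `X₂·W[[X₁,X₂]]` (inside the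
localization). -/
theorem statement_4 (p : ℕ) [Fact p.Prime]
    (b : W p) (hb : phiW p (phiW p b) = b)
    -- `Φ` is the ring endomorphism `φ` of `W[[X₁,X₂]]` (characterized by coefficients):
    (Φ : Mv p →+* Mv p)
    (hΦ₁ : ∀ (F : Mv p) (d : Fin 2 →₀ ℕ),
      MvPowerSeries.coeff (p • d) (Φ F) = phiW p (MvPowerSeries.coeff d F))
    (hΦ₂ : ∀ (F : Mv p) (d : Fin 2 →₀ ℕ),
      (¬ ∃ e : Fin 2 →₀ ℕ, d = p • e) → MvPowerSeries.coeff d (Φ F) = 0)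
    -- `ΦL` is the unique extension of `φ` to `W[[X₁,X₂]][1/p]`:
    (ΦL : L2 p →+* L2 p)
    (hΦL : ∀ F : Mv p, ΦL (iota2 p F) = iota2 p (Φ F))
    -- `pinv` is the inverse `p⁻¹` in `W[[X₁,X₂]][1/p]`:
    (pinv : L2 p) (hpinv : iota2 p ((p : Mv p)) * pinv = 1)
    -- `fX1 = f(X₁)`, `fX1p = f(X₁^p)`, `gX1 = g(X₁)`, `gX1p = g(X₁^p)`:
    (fX1 fX1p gX1 gX1p : Mv p)
    (hfX1 : IsEvalAtX1Pow p 1 (fSeries p) fX1)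
    (hfX1p : IsEvalAtX1Pow p p (fSeries p) fX1p)
    (hgX1 : IsEvalAtX1Pow p 1 (gSeries p) gX1)
    (hgX1p : IsEvalAtX1Pow p p (gSeries p) gX1p) :
    pinv • (!![iota2 p (MvPowerSeries.X 0), iota2 p ((p : Mv p)); 1, 0] *
          (!![iota2 p (-(CMv p b * fX1p)), iota2 p ((p : Mv p) * CMv p b);
              iota2 p (CMv p (phiW p b)) - pinv * iota2 p (CMv p b * gX1p),
              iota2 p (CMv p b * fX1p)]).map ⇑ΦL *
          !![0, iota2 p ((p : Mv p)); 1, -iota2 p (MvPowerSeries.X 0)]) =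
      !![iota2 p (CMv p (phiW p b) * fX1),
          iota2 p ((p : Mv p) * CMv p b - CMv p (phiW p b) * gX1);
          iota2 p (CMv p (phiW p b)), iota2 p (-(CMv p (phiW p b) * fX1))] ∧
    ∀ i j : Fin 2, ∃ h : Mv p,
      (iota2 p ((p : Mv p)) •
          (pinv • (!![iota2 p (MvPowerSeries.X 1), iota2 p ((p : Mv p)); 1, 0] *
              (!![iota2 p (CMv p (phiW p b) * fX1),
                  iota2 p ((p : Mv p) * CMv p b - CMv p (phiW p b) * gX1);
                  iota2 p (CMv p (phiW p b)),
                  iota2 p (-(CMv p (phiW p b) * fX1))]).map ⇑ΦL *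
              !![0, iota2 p ((p : Mv p)); 1, -iota2 p (MvPowerSeries.X 1)]) -
            !![iota2 p (-(CMv p b * fX1p)), iota2 p ((p : Mv p) * CMv p b);
                iota2 p (CMv p (phiW p b)) - pinv * iota2 p (CMv p b * gX1p),
                iota2 p (CMv p b * fX1p)])) i j =
        iota2 p (MvPowerSeries.X 1 * h) := by
  have hp : 2 ≤ p := (Fact.out : p.Prime).two_le
  have hΦf : Φ fX1 = fX1p := (hfX1.frobenius hΦ₁ hΦ₂ (mul_one p)).unique hfX1p
  have hΦfp : Φ fX1p = fX1 - MvPowerSeries.X 0 := by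
    refine (hfX1p.frobenius hΦ₁ hΦ₂ (sq p).symm).unique (.of_expand (pow_ne_zero 2 (by omega)) ?_)
    rw [expand_fSeries hp]
    exact hfX1.sub .X
  have hg : gX1 = fX1 ^ 2 := hgX1.unique (by rw [← fSeries_mul_self hp, sq]; exact hfX1.mul hfX1)
  have hg' : gX1p = fX1p ^ 2 := by
    rw [← hΦf, ← map_pow, ← hg]
    exact hgX1p.unique (hgX1.frobenius hΦ₁ hΦ₂ (mul_one p))
  have hσb : ΦL (iota2 p (CMv p b)) = iota2 p (CMv p (phiW p b)) := by
    rw [hΦL, frobenius_C hΦ₁ hΦ₂]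
  have hσb' : ΦL (iota2 p (CMv p (phiW p b))) = iota2 p (CMv p b) := by
    rw [hΦL, frobenius_C hΦ₁ hΦ₂, hb]
  simp only [hg, hg', map_mul, map_neg, map_sub, map_pow, map_natCast] at hpinv ⊢
  refine ⟨recursion_Y_eq hpinv (map_natCast ΦL p) hσb hσb' (by rw [hΦL, hΦfp, map_sub]),
    fun i j => ⟨!![(p : Mv p) * CMv p (phiW p b) - CMv p b * fX1p ^ 2,
      2 * (p : Mv p) * CMv p b * fX1p -
        MvPowerSeries.X 1 * ((p : Mv p) * CMv p (phiW p b) - CMv p b * fX1p ^ 2);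
      0, -((p : Mv p) * CMv p (phiW p b) - CMv p b * fX1p ^ 2)] i j, ?_⟩⟩
  rw [recursion_Z_sub_eq hpinv (map_natCast ΦL p) hσb hσb' (by rw [hΦL, hΦf])]
  fin_cases i <;> fin_cases j <;> simp [map_ofNat]
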